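/- arXiv:1906.02272 — 3 statements merged into one kernel-verified Lean document; each statement's English description precedes it below -/
import Mathlib

section
/- Let ε ~ N(0, σ²) and let ψ_α(t) = t·exp(-α t²/2) be the Welsch score function with α > 0. Then h(z) := E[ψ_α(z + ε)] = z·(1 + ασ²)^{-3/2}·exp(-α z²/(2(1 + ασ²))) for every z ∈ ℝ. -/
open MeasureTheory Real

lemma odd_gaussian_integral_zero {b : ℝ} :
    ∫ x : ℝ, x * Real.exp (-b * x ^ 2) = 0 := by
  have h := integral_neg_eq_self (fun x : ℝ => x * Real.exp (-b * x ^ 2)) volume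
  simp only [neg_sq, neg_mul] at h ⊢
  rw [integral_neg] at h
  linarith

/-- For `ε ~ N(0, σ²)` and the Welsch score `ψ_α(t) = t·exp(-α t²/2)` with `α > 0`,
`h(z) = E[ψ_α(z + ε)] = z (1 + ασ²)^{-3/2} exp(-α z² / (2(1 + ασ²)))`. -/
theorem welsch_gaussian_expectation (α σ z : ℝ) (hα : 0 < α) (hσ : 0 < σ) :
    (∫ ε : ℝ, (z + ε) * Real.exp (-α * (z + ε) ^ 2 / 2) *
        ((Real.sqrt (2 * Real.pi * σ ^ 2))⁻¹ * Real.exp (-ε ^ 2 / (2 * σ ^ 2))))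
      = z * (1 + α * σ ^ 2) ^ (-(3 : ℝ) / 2) *
        Real.exp (-α * z ^ 2 / (2 * (1 + α * σ ^ 2))) := by
  set c : ℝ := 1 + α * σ ^ 2 with hc_def
  have hc : 0 < c := by positivity
  have hσ2 : (0:ℝ) < σ ^ 2 := by positivity
  set A : ℝ := c / (2 * σ ^ 2) with hA_def
  have hA : 0 < A := by positivity
  set m : ℝ := -(α * z * σ ^ 2) / c with hm_def
  set K : ℝ := (Real.sqrt (2 * Real.pi * σ ^ 2))⁻¹ with hK_def
  set D : ℝ := -α * z ^ 2 / (2 * c) with hD_def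
  -- Step 1: pointwise rewriting (complete the square)
  have key : ∀ ε : ℝ, (z + ε) * Real.exp (-α * (z + ε) ^ 2 / 2) *
      (K * Real.exp (-ε ^ 2 / (2 * σ ^ 2)))
      = K * Real.exp D * ((z + ε) * Real.exp (-A * (ε - m) ^ 2)) := by
    intro ε
    have hexp : Real.exp (-α * (z + ε) ^ 2 / 2) * Real.exp (-ε ^ 2 / (2 * σ ^ 2))
        = Real.exp D * Real.exp (-A * (ε - m) ^ 2) := by
      rw [← Real.exp_add, ← Real.exp_add]
      congr 1
      rw [hD_def, hA_def, hm_def]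
      field_simp
      ring
    calc (z + ε) * Real.exp (-α * (z + ε) ^ 2 / 2) * (K * Real.exp (-ε ^ 2 / (2 * σ ^ 2)))
        = K * ((z + ε) * (Real.exp (-α * (z + ε) ^ 2 / 2) * Real.exp (-ε ^ 2 / (2 * σ ^ 2)))) := by
          ring
      _ = K * ((z + ε) * (Real.exp D * Real.exp (-A * (ε - m) ^ 2))) := by rw [hexp]
      _ = K * Real.exp D * ((z + ε) * Real.exp (-A * (ε - m) ^ 2)) := by ring
  simp only [key]
  rw [integral_const_mul]
  -- Step 2: translate by m
  have htrans : (∫ ε : ℝ, (z + ε) * Real.exp (-A * (ε - m) ^ 2))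
      = ∫ v : ℝ, (z + m + v) * Real.exp (-A * v ^ 2) := by
    rw [← integral_add_right_eq_self (fun ε : ℝ => (z + ε) * Real.exp (-A * (ε - m) ^ 2)) m]
    congr 1
    ext v
    have : v + m - m = v := by ring
    rw [this]
    ring_nf
  rw [htrans]
  -- Step 3: split and evaluate
  have hsplit : (∫ v : ℝ, (z + m + v) * Real.exp (-A * v ^ 2))
      = (z + m) * Real.sqrt (Real.pi / A) := by
    have h1 : Integrable fun v : ℝ => (z + m) * Real.exp (-A * v ^ 2) :=
      (integrable_exp_neg_mul_sq hA).const_mul _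
    have h2 : Integrable fun v : ℝ => v * Real.exp (-A * v ^ 2) :=
      integrable_mul_exp_neg_mul_sq hA
    have : (fun v : ℝ => (z + m + v) * Real.exp (-A * v ^ 2))
        = fun v : ℝ => (z + m) * Real.exp (-A * v ^ 2) + v * Real.exp (-A * v ^ 2) := by
      ext v; ring
    rw [this, integral_add h1 h2, integral_const_mul, integral_gaussian,
      odd_gaussian_integral_zero, add_zero]
  rw [hsplit]
  -- Step 4: algebra
  have hzm : z + m = z / c := by
    rw [hm_def, hc_def]; field_simp; ring
  have hπA : Real.pi / A = (2 * Real.pi * σ ^ 2) / c := by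
    rw [hA_def]; field_simp
  have hsqrt : Real.sqrt (Real.pi / A) = Real.sqrt (2 * Real.pi * σ ^ 2) / Real.sqrt c := by
    rw [hπA]
    exact Real.sqrt_div (by positivity) c
  have hrpow : c ^ (-(3 : ℝ) / 2) = (c * Real.sqrt c)⁻¹ := by
    rw [show (-(3:ℝ)/2) = -(3/2) by ring, Real.rpow_neg hc.le,
      show (3:ℝ)/2 = 1 + 1/2 by ring, Real.rpow_add hc, Real.rpow_one,
      ← Real.sqrt_eq_rpow]
  have hs : (0:ℝ) < Real.sqrt (2 * Real.pi * σ ^ 2) := Real.sqrt_pos.mpr (by positivity)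
  have hsc : (0:ℝ) < Real.sqrt c := Real.sqrt_pos.mpr hc
  rw [hsqrt, hzm, hrpow, hK_def]
  have hDexp : Real.exp D = Real.exp (-α * z ^ 2 / (2 * c)) := by rw [hD_def]
  rw [hDexp]
  field_simp
end

section
/- For the Welsch score ψ_α(t) = t·e^{-αt²/2} with α > 0, the second derivative ψ_α''(t) = α·t·e^{-αt²/2}·(αt² - 3) satisfies |ψ_α''(t)| ≤ 1.5·√α for all t ∈ ℝ. -/
/-- For the Welsch score `ψ_α(t) = t e^{-α t²/2}` with `α > 0`, the second derivative
`ψ_α''(t) = α t e^{-α t²/2} (α t² - 3)` satisfies `|ψ_α''(t)| ≤ 1.5 √α`. -/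
theorem welsch_score_second_deriv_bound (α : ℝ) (hα : 0 < α) (t : ℝ) :
    |Real.exp (-α * t ^ 2 / 2) * (α * t * (α * t ^ 2 - 3))| ≤ 1.5 * Real.sqrt α := by
  set u : ℝ := α * t ^ 2 with hu
  have hu0 : 0 ≤ u := by positivity
  have htaylor : 1 + u + u ^ 2 / 2 + u ^ 3 / 6 + u ^ 4 / 24 ≤ Real.exp u := by
    have h := Real.sum_le_exp_of_nonneg hu0 5
    simp [Finset.sum_range_succ, Nat.factorial] at h
    linarith
  have hkey : u * (u - 3) ^ 2 ≤ 9 / 4 * Real.exp u := by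
    nlinarith [sq_nonneg (3 * u ^ 2 - 10 * u), sq_nonneg (u - 1 / 2), sq_nonneg u]
  set x : ℝ := Real.exp (-α * t ^ 2 / 2) * (α * t * (α * t ^ 2 - 3)) with hx
  have hx2 : x ^ 2 ≤ (3 / 2 * Real.sqrt α) ^ 2 := by
    have he : Real.exp (-α * t ^ 2 / 2) ^ 2 = Real.exp (-u) := by
      rw [← Real.exp_nat_mul]
      norm_num
      ring_nf
      rw [hu]
    have hsq : Real.sqrt α ^ 2 = α := Real.sq_sqrt hα.le
    have hei : Real.exp (-u) = (Real.exp u)⁻¹ := by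
      rw [← Real.exp_neg]
    have hepos : 0 < Real.exp u := Real.exp_pos u
    have h1 : x ^ 2 = Real.exp (-u) * (α * u * (u - 3) ^ 2) := by
      rw [hx, mul_pow, he, hu]
      ring
    rw [h1, hei, mul_pow, hsq]
    rw [inv_mul_le_iff₀ hepos]
    nlinarith
  calc |x| = Real.sqrt (x ^ 2) := (Real.sqrt_sq_eq_abs x).symm
    _ ≤ Real.sqrt ((3 / 2 * Real.sqrt α) ^ 2) := Real.sqrt_le_sqrt hx2
    _ = 3 / 2 * Real.sqrt α := Real.sqrt_sq (by positivity)
    _ = 1.5 * Real.sqrt α := by norm_num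
end

section
/- Let ε ~ N(0, σ²) and let ψ_α be the Huber score with threshold α > 0 (ψ_α(t) = t for |t| ≤ α, sign(t)α otherwise). Then for all z ≥ 0, h(z) := E[ψ_α(z + ε)] ≥ (α³/(3√(2π)σ³) + α/(√(2π)σ))·z·e^{-(z²+α²)/(2σ²)}; in particular h(z) > 0 for z > 0. -/
open MeasureTheory

section HuberAux
open Set Filter

lemma huber_aux_exp_form (σ : ℝ) : (fun x : ℝ => x * Real.exp (-x^2/(2*σ^2)))
    = fun x : ℝ => x * Real.exp (-(2*σ^2)⁻¹ * x^2) := by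
  funext x; congr 1; ring

lemma huber_aux_int_mul_exp (σ : ℝ) (hσ : 0 < σ) :
    Integrable (fun x : ℝ => x * Real.exp (-x^2/(2*σ^2))) := by
  rw [huber_aux_exp_form σ]
  exact integrable_mul_exp_neg_mul_sq (by positivity)

lemma huber_aux_int_exp (σ : ℝ) (hσ : 0 < σ) :
    Integrable (fun x : ℝ => Real.exp (-x^2/(2*σ^2))) := by
  have h : (fun x : ℝ => Real.exp (-x^2/(2*σ^2)))
      = fun x : ℝ => Real.exp (-(2*σ^2)⁻¹ * x^2) := by
    funext x; congr 1; ring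
  rw [h]
  exact integrable_exp_neg_mul_sq (by positivity)

lemma huber_aux_gauss_tail (σ : ℝ) (hσ : 0 < σ) (a : ℝ) :
    ∫ t in Ioi a, t * Real.exp (-t^2/(2*σ^2)) = σ^2 * Real.exp (-a^2/(2*σ^2)) := by
  have hderiv : ∀ x ∈ Ici a, HasDerivAt (fun t : ℝ => -σ^2 * Real.exp (-t^2/(2*σ^2)))
      (x * Real.exp (-x^2/(2*σ^2))) x := by
    intro x _
    have h1 : HasDerivAt (fun t : ℝ => -t^2/(2*σ^2)) (-(2*x^1)/(2*σ^2)) x :=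
      (hasDerivAt_pow 2 x).neg.div_const (2*σ^2)
    have h2 := (h1.exp).const_mul (-σ^2)
    convert h2 using 1
    · rfl
    · rfl
    field_simp
  have htend : Tendsto (fun t : ℝ => -σ^2 * Real.exp (-t^2/(2*σ^2))) atTop (nhds 0) := by
    have h0 : Tendsto (fun t : ℝ => -t^2/(2*σ^2)) atTop atBot := by
      apply Tendsto.atBot_div_const (by positivity)
      exact tendsto_neg_atTop_atBot.comp (tendsto_pow_atTop two_ne_zero)
    have h1 := Real.tendsto_exp_atBot.comp h0
    have h2 := h1.const_mul (-σ^2)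
    simpa using h2
  have h := integral_Ioi_of_hasDerivAt_of_tendsto' hderiv
    ((huber_aux_int_mul_exp σ hσ).integrableOn) htend
  rw [h]; ring

lemma huber_aux_gauss_tail_neg (σ α : ℝ) (hσ : 0 < σ) :
    ∫ t in Iio (-α), (-t) * Real.exp (-t^2/(2*σ^2)) = σ^2 * Real.exp (-α^2/(2*σ^2)) := by
  have h := integral_comp_neg_Iic (-α) (fun x => x * Real.exp (-x^2/(2*σ^2)))
  simp only [neg_neg, neg_sq] at h
  rw [setIntegral_congr_set Iio_ae_eq_Iic]
  rw [h, huber_aux_gauss_tail σ hσ α]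

lemma huber_aux_sq_icc (α : ℝ) (hα : 0 < α) : ∫ t in Icc (-α) α, t^2 = 2*α^3/3 := by
  rw [integral_Icc_eq_integral_Ioc, ← intervalIntegral.integral_of_le (by linarith : -α ≤ α),
    integral_pow]
  norm_num
  ring

end HuberAux

/-- Huber's score function with threshold `α`. -/
noncomputable def huberScore (α t : ℝ) : ℝ := if |t| ≤ α then t else Real.sign t * α

section HuberAux2

lemma huber_eq_clamp {α : ℝ} (hα : 0 < α) (t : ℝ) :
    huberScore α t = max (-α) (min t α) := by
  unfold huberScore
  rcases le_or_gt |t| α with h | h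
  · rw [if_pos h]
    rw [abs_le] at h
    rw [min_eq_left h.2, max_eq_right h.1]
  · rw [if_neg (not_le.2 h)]
    rcases lt_or_ge t 0 with ht | ht
    · have h1 : t < -α := by rw [abs_of_neg ht] at h; linarith
      rw [Real.sign_of_neg ht, min_eq_left (by linarith), max_eq_left (by linarith)]
      ring
    · have h1 : α < t := by rwa [abs_of_nonneg ht] at h
      rw [Real.sign_of_pos (by linarith), min_eq_right h1.le, max_eq_right (by linarith)]
      ring

lemma huber_cont {α : ℝ} (hα : 0 < α) : Continuous (huberScore α) := by
  have h : huberScore α = fun t => max (-α) (min t α) := funext (huber_eq_clamp hα)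
  rw [h]
  exact continuous_const.max (continuous_id.min continuous_const)

lemma huber_abs_le {α : ℝ} (hα : 0 < α) (t : ℝ) : |huberScore α t| ≤ α := by
  rw [huber_eq_clamp hα t, abs_le]
  exact ⟨le_max_left _ _, max_le (by linarith) (min_le_right _ _)⟩

lemma huber_neg {α : ℝ} (t : ℝ) : huberScore α (-t) = -huberScore α t := by
  unfold huberScore
  rw [abs_neg]
  rcases le_or_gt |t| α with h | h
  · rw [if_pos h, if_pos h]
  · rw [if_neg (not_le.2 h), if_neg (not_le.2 h), Real.sign_neg]
    ring

lemma huber_of_nonneg {α : ℝ} (hα : 0 < α) {t : ℝ} (ht : 0 ≤ t) :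
    huberScore α t = min t α := by
  rw [huber_eq_clamp hα t, max_eq_right]
  exact le_min (by linarith) (by linarith)

open Set Filter in
/-- Key quantitative lower bound. -/
lemma huber_key (α σ z : ℝ) (hα : 0 < α) (hσ : 0 < σ) (hz : 0 ≤ z) :
    2*z/σ^2 * Real.exp (-z^2/(2*σ^2)) * (Real.sqrt (2*Real.pi*σ^2))⁻¹ *
        (Real.exp (-α^2/(2*σ^2)) * (α^3/3 + α*σ^2))
      ≤ 2 * ∫ e : ℝ, huberScore α (z + e) *
          ((Real.sqrt (2 * Real.pi * σ ^ 2))⁻¹ * Real.exp (-e ^ 2 / (2 * σ ^ 2))) := by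
  set K : ℝ := (Real.sqrt (2*Real.pi*σ^2))⁻¹ with hKdef
  have hK0 : 0 < K := by
    rw [hKdef]
    have : 0 < Real.sqrt (2*Real.pi*σ^2) := Real.sqrt_pos.2 (by positivity)
    positivity
  set g : ℝ → ℝ := fun x => K * Real.exp (-x^2/(2*σ^2)) with hgdef
  have hgpos : ∀ x, 0 < g x := by
    intro x; rw [hgdef]; positivity
  have hgc : Continuous g := by
    rw [hgdef]
    exact continuous_const.mul (Real.continuous_exp.comp (by fun_prop))
  have hgint : Integrable g := (huber_aux_int_exp σ hσ).const_mul K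
  have hgeven : ∀ x, g (-x) = g x := by
    intro x; rw [hgdef]; simp [neg_sq]
  set F : ℝ → ℝ := fun e => huberScore α (z + e) * g e with hFdef
  have hFcont : Continuous F := by
    rw [hFdef]
    exact ((huber_cont hα).comp (continuous_const.add continuous_id)).mul hgc
  have hFint : Integrable F := by
    refine (hgint.const_mul α).mono' hFcont.aestronglyMeasurable ?_
    refine Eventually.of_forall fun e => ?_
    calc ‖F e‖ = |huberScore α (z+e)| * g e := by
          rw [hFdef, Real.norm_eq_abs, abs_mul, abs_of_pos (hgpos e)]
      _ ≤ α * g e := mul_le_mul_of_nonneg_right (huber_abs_le hα _) (hgpos e).le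
  set v : ℝ → ℝ := fun t => huberScore α t * g (t - z) with hvdef
  set w : ℝ → ℝ := fun t => huberScore α t * g (t + z) with hwdef
  have hvF : ∀ t, v t = F (t - z) := by
    intro t
    show huberScore α t * g (t - z) = huberScore α (z + (t - z)) * g (t - z)
    rw [show z + (t - z) = t from by ring]
  have hintv : Integrable v :=
    (hFint.comp_sub_right z).congr (Eventually.of_forall fun t => (hvF t).symm)
  have hIv : ∫ t, v t = ∫ e, F e := by
    simp_rw [hvF]
    exact integral_sub_right_eq_self F z
  have hwv : ∀ t, w t = -v (-t) := by
    intro t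
    show huberScore α t * g (t + z) = -(huberScore α (-t) * g (-t - z))
    rw [huber_neg, show -t - z = -(t + z) from by ring, hgeven]
    ring
  have hintw : Integrable w :=
    ((hintv.comp_neg).neg').congr (Eventually.of_forall fun t => (hwv t).symm)
  have hIw : ∫ t, w t = -∫ e, F e := by
    simp_rw [hwv]
    rw [integral_neg, integral_neg_eq_self, hIv]
  have hsub : ∫ t, (v t - w t) = 2 * ∫ e, F e := by
    rw [integral_sub hintv hintw, hIv, hIw]; ring
  set c : ℝ := 2*z/σ^2 * Real.exp (-z^2/(2*σ^2)) * K with hcdef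
  set E : ℝ := Real.exp (-α^2/(2*σ^2)) with hEdef
  have hc0 : 0 ≤ c := by
    rw [hcdef]
    have h1 : (0:ℝ) ≤ 2*z/σ^2 := div_nonneg (by linarith) (by positivity)
    exact mul_nonneg (mul_nonneg h1 (Real.exp_pos _).le) hK0.le
  have hdiff : ∀ t : ℝ, 0 ≤ t →
      c * (t * Real.exp (-t^2/(2*σ^2))) ≤ g (t - z) - g (t + z) := by
    intro t ht
    have hx : 0 ≤ t*z/σ^2 := div_nonneg (mul_nonneg ht hz) (by positivity)
    have hs : 2*(t*z/σ^2) ≤ Real.exp (t*z/σ^2) - Real.exp (-(t*z/σ^2)) := by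
      have h1 := Real.self_le_sinh_iff.mpr hx
      rw [Real.sinh_eq] at h1; linarith
    have e1 : -(t-z)^2/(2*σ^2) = (-t^2/(2*σ^2) + -z^2/(2*σ^2)) + t*z/σ^2 := by
      field_simp; ring
    have e2 : -(t+z)^2/(2*σ^2) = (-t^2/(2*σ^2) + -z^2/(2*σ^2)) + -(t*z/σ^2) := by
      field_simp; ring
    have hgv : g (t - z) - g (t + z)
        = K * (Real.exp (-t^2/(2*σ^2)) * Real.exp (-z^2/(2*σ^2)))
            * (Real.exp (t*z/σ^2) - Real.exp (-(t*z/σ^2))) := by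
      rw [hgdef]
      show K * Real.exp (-(t-z)^2/(2*σ^2)) - K * Real.exp (-(t+z)^2/(2*σ^2)) = _
      rw [e1, e2]
      simp only [Real.exp_add]
      ring
    rw [hgv]
    calc c * (t * Real.exp (-t^2/(2*σ^2)))
        = K * (Real.exp (-t^2/(2*σ^2)) * Real.exp (-z^2/(2*σ^2))) * (2*(t*z/σ^2)) := by
          rw [hcdef]; field_simp
      _ ≤ K * (Real.exp (-t^2/(2*σ^2)) * Real.exp (-z^2/(2*σ^2)))
            * (Real.exp (t*z/σ^2) - Real.exp (-(t*z/σ^2))) := by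
          apply mul_le_mul_of_nonneg_left hs (by positivity)
  have hhub_nonneg : ∀ t : ℝ, 0 ≤ t → 0 ≤ huberScore α t := by
    intro t ht
    rw [huber_of_nonneg hα ht]
    exact le_min ht hα.le
  have hcore : ∀ t : ℝ, 0 ≤ t →
      c * (huberScore α t * (t * Real.exp (-t^2/(2*σ^2)))) ≤ v t - w t := by
    intro t ht
    have h1 := hdiff t ht
    have h2 := hhub_nonneg t ht
    show _ ≤ huberScore α t * g (t - z) - huberScore α t * g (t + z)
    calc c * (huberScore α t * (t * Real.exp (-t^2/(2*σ^2))))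
        = huberScore α t * (c * (t * Real.exp (-t^2/(2*σ^2)))) := by ring
      _ ≤ huberScore α t * (g (t - z) - g (t + z)) := mul_le_mul_of_nonneg_left h1 h2
      _ = huberScore α t * g (t - z) - huberScore α t * g (t + z) := by ring
  have hDeven : ∀ t, v (-t) - w (-t) = v t - w t := by
    intro t
    show huberScore α (-t) * g (-t - z) - huberScore α (-t) * g (-t + z) = _
    rw [huber_neg, show -t - z = -(t + z) from by ring,
      show -t + z = -(t - z) from by ring, hgeven, hgeven]
    show _ = huberScore α t * g (t - z) - huberScore α t * g (t + z)
    ring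
  have B1pos : ∀ t : ℝ, 0 ≤ t → t ≤ α → c * E * t^2 ≤ v t - w t := by
    intro t ht htα
    refine le_trans ?_ (hcore t ht)
    rw [huber_of_nonneg hα ht, min_eq_left htα]
    have hexp : E ≤ Real.exp (-t^2/(2*σ^2)) := by
      rw [hEdef]
      apply Real.exp_le_exp.2
      have h1 : t^2 ≤ α^2 := by nlinarith
      have h2 : (0:ℝ) < 2*σ^2 := by positivity
      apply div_le_div_of_nonneg_right ?_ h2.le
      linarith
    calc c * E * t^2 ≤ c * Real.exp (-t^2/(2*σ^2)) * t^2 := by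
          apply mul_le_mul_of_nonneg_right (mul_le_mul_of_nonneg_left hexp hc0) (sq_nonneg t)
      _ = c * (t * (t * Real.exp (-t^2/(2*σ^2)))) := by ring
  have B2pos : ∀ t : ℝ, α ≤ t → c * α * (t * Real.exp (-t^2/(2*σ^2))) ≤ v t - w t := by
    intro t htα
    have ht : 0 ≤ t := le_trans hα.le htα
    refine le_trans ?_ (hcore t ht)
    rw [huber_of_nonneg hα ht, min_eq_right htα]
    exact le_of_eq (by ring)
  have B1 : ∀ t : ℝ, -α ≤ t → t ≤ α → c * E * t^2 ≤ v t - w t := by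
    intro t h1 h2
    rcases le_total 0 t with ht | ht
    · exact B1pos t ht h2
    · rw [← hDeven t, show t^2 = (-t)^2 from by ring]
      exact B1pos (-t) (by linarith) (by linarith)
  have B3 : ∀ t : ℝ, t ≤ -α → c * α * ((-t) * Real.exp (-t^2/(2*σ^2))) ≤ v t - w t := by
    intro t h1
    rw [← hDeven t]
    have h2 := B2pos (-t) (by linarith)
    simpa [neg_sq] using h2
  set M : ℝ → ℝ := fun t =>
      Set.indicator (Icc (-α) α) (fun t => c*E*t^2) t
      + Set.indicator (Ioi α) (fun t => c*α*(t*Real.exp (-t^2/(2*σ^2)))) t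
      + Set.indicator (Iio (-α)) (fun t => c*α*((-t)*Real.exp (-t^2/(2*σ^2)))) t with hMdef
  have hMle : ∀ t, M t ≤ v t - w t := by
    intro t
    rw [hMdef]
    simp only [Set.indicator_apply, mem_Icc, mem_Ioi, mem_Iio]
    rcases lt_or_ge t (-α) with h1 | h1
    · rw [if_neg (by push_neg; intro h; linarith), if_neg (by push_neg; linarith),
        if_pos h1]
      simpa using B3 t h1.le
    · rcases le_or_gt t α with h2 | h2
      · rw [if_pos ⟨h1, h2⟩, if_neg (not_lt.2 h2), if_neg (not_lt.2 h1)]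
        simpa using B1 t h1 h2
      · rw [if_neg (by push_neg; intro h; linarith), if_pos h2, if_neg (not_lt.2 (by linarith))]
        simpa using B2pos t h2.le
  have hint1 : Integrable (Set.indicator (Icc (-α) α) (fun t : ℝ => c*E*t^2)) := by
    rw [integrable_indicator_iff measurableSet_Icc]
    exact Continuous.integrableOn_Icc (by fun_prop)
  have hint2 : Integrable
      (Set.indicator (Ioi α) (fun t : ℝ => c*α*(t*Real.exp (-t^2/(2*σ^2))))) := by
    rw [integrable_indicator_iff measurableSet_Ioi]
    exact ((huber_aux_int_mul_exp σ hσ).const_mul (c*α)).integrableOn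
  have hint3 : Integrable
      (Set.indicator (Iio (-α)) (fun t : ℝ => c*α*((-t)*Real.exp (-t^2/(2*σ^2))))) := by
    have h : (fun t : ℝ => c*α*((-t)*Real.exp (-t^2/(2*σ^2))))
        = fun t : ℝ => (-(c*α))*(t*Real.exp (-t^2/(2*σ^2))) := by
      funext t; ring
    rw [integrable_indicator_iff measurableSet_Iio, h]
    exact ((huber_aux_int_mul_exp σ hσ).const_mul (-(c*α))).integrableOn
  have hMint : Integrable M := by
    rw [hMdef]
    exact (hint1.add hint2).add hint3
  have hint1' : Integrable (fun t : ℝ => Set.indicator (Icc (-α) α) (fun t => c*E*t^2) t) :=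
    hint1
  have hint2' : Integrable (fun t : ℝ =>
      Set.indicator (Ioi α) (fun t => c*α*(t*Real.exp (-t^2/(2*σ^2)))) t) := hint2
  have hint3' : Integrable (fun t : ℝ =>
      Set.indicator (Iio (-α)) (fun t => c*α*((-t)*Real.exp (-t^2/(2*σ^2)))) t) := hint3
  have hint12 : Integrable (fun t : ℝ =>
      Set.indicator (Icc (-α) α) (fun t => c*E*t^2) t
      + Set.indicator (Ioi α) (fun t => c*α*(t*Real.exp (-t^2/(2*σ^2)))) t) :=
    hint1.add hint2
  have hMval : ∫ t, M t = c*E*(2*α^3/3) + c*α*(σ^2*E) + c*α*(σ^2*E) := by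
    show ∫ t : ℝ, (Set.indicator (Icc (-α) α) (fun t => c*E*t^2) t
      + Set.indicator (Ioi α) (fun t => c*α*(t*Real.exp (-t^2/(2*σ^2)))) t
      + Set.indicator (Iio (-α)) (fun t => c*α*((-t)*Real.exp (-t^2/(2*σ^2)))) t) = _
    rw [integral_add hint12 hint3', integral_add hint1' hint2']
    rw [integral_indicator measurableSet_Icc, integral_indicator measurableSet_Ioi,
      integral_indicator measurableSet_Iio]
    rw [integral_const_mul, integral_const_mul, integral_const_mul]
    rw [huber_aux_sq_icc α hα, huber_aux_gauss_tail σ hσ α, huber_aux_gauss_tail_neg σ α hσ]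
  have hfinal : ∫ t, M t ≤ ∫ t, (v t - w t) :=
    integral_mono hMint (hintv.sub hintw) hMle
  rw [hMval, hsub] at hfinal
  have heq : 2*z/σ^2 * Real.exp (-z^2/(2*σ^2)) * K * (E * (α^3/3 + α*σ^2))
      = c*E*(2*α^3/3) + c*α*(σ^2*E) + c*α*(σ^2*E) - c*E*(α^3/3) - c*α*(σ^2*E) := by
    rw [hcdef]; ring
  have hterm : 0 ≤ c*E*(α^3/3) + c*α*(σ^2*E) := by
    have hE : 0 ≤ E := (Real.exp_pos _).le
    have h1 : 0 ≤ c*E*(α^3/3) := by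
      apply mul_nonneg (mul_nonneg hc0 hE)
      positivity
    have h2 : 0 ≤ c*α*(σ^2*E) := by
      apply mul_nonneg (mul_nonneg hc0 hα.le)
      positivity
    linarith
  show 2*z/σ^2 * Real.exp (-z^2/(2*σ^2)) * K * (E * (α^3/3 + α*σ^2)) ≤ 2 * ∫ e, F e
  rw [heq]
  linarith

/-- For `ε ~ N(0, σ²)` and the Huber score `ψ_α` with `α > 0`, for all `z ≥ 0`:
`h(z) = E[ψ_α(z+ε)] ≥ (α³/(3√(2π)σ³) + α/(√(2π)σ)) z e^{-(z²+α²)/(2σ²)}`;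
in particular `h(z) > 0` for `z > 0`. -/
theorem huber_gaussian_expectation_lower_bound (α σ : ℝ) (hα : 0 < α) (hσ : 0 < σ) :
    (∀ z : ℝ, 0 ≤ z →
      (α ^ 3 / (3 * Real.sqrt (2 * Real.pi) * σ ^ 3) + α / (Real.sqrt (2 * Real.pi) * σ))
          * z * Real.exp (-(z ^ 2 + α ^ 2) / (2 * σ ^ 2))
        ≤ ∫ e : ℝ, huberScore α (z + e) *
            ((Real.sqrt (2 * Real.pi * σ ^ 2))⁻¹ * Real.exp (-e ^ 2 / (2 * σ ^ 2)))) ∧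
    (∀ z : ℝ, 0 < z →
      0 < ∫ e : ℝ, huberScore α (z + e) *
            ((Real.sqrt (2 * Real.pi * σ ^ 2))⁻¹ * Real.exp (-e ^ 2 / (2 * σ ^ 2)))) := by
  have hs2 : (0:ℝ) < Real.sqrt (2 * Real.pi) := Real.sqrt_pos.2 (by positivity)
  have hcoef : 0 < α ^ 3 / (3 * Real.sqrt (2 * Real.pi) * σ ^ 3)
      + α / (Real.sqrt (2 * Real.pi) * σ) := by
    have h1 : 0 < α ^ 3 / (3 * Real.sqrt (2 * Real.pi) * σ ^ 3) :=
      div_pos (by positivity) (by positivity)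
    have h2 : 0 < α / (Real.sqrt (2 * Real.pi) * σ) := div_pos hα (by positivity)
    linarith
  have hKs : Real.sqrt (2*Real.pi*σ^2) = Real.sqrt (2*Real.pi) * σ := by
    rw [Real.sqrt_mul (by positivity) (σ^2), Real.sqrt_sq hσ.le]
  have main : ∀ z : ℝ, 0 ≤ z →
      (α ^ 3 / (3 * Real.sqrt (2 * Real.pi) * σ ^ 3) + α / (Real.sqrt (2 * Real.pi) * σ))
          * z * Real.exp (-(z ^ 2 + α ^ 2) / (2 * σ ^ 2))
        ≤ ∫ e : ℝ, huberScore α (z + e) *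
            ((Real.sqrt (2 * Real.pi * σ ^ 2))⁻¹ * Real.exp (-e ^ 2 / (2 * σ ^ 2))) := by
    intro z hz
    have hkey := huber_key α σ z hα hσ hz
    have hexp : Real.exp (-(z^2+α^2)/(2*σ^2))
        = Real.exp (-z^2/(2*σ^2)) * Real.exp (-α^2/(2*σ^2)) := by
      rw [← Real.exp_add]; congr 1; field_simp; ring
    have htar0 : 0 ≤ (α ^ 3 / (3 * Real.sqrt (2 * Real.pi) * σ ^ 3)
        + α / (Real.sqrt (2 * Real.pi) * σ)) * z * Real.exp (-(z ^ 2 + α ^ 2) / (2 * σ ^ 2)) :=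
      mul_nonneg (mul_nonneg hcoef.le hz) (Real.exp_pos _).le
    have heq2 : 2*z/σ^2 * Real.exp (-z^2/(2*σ^2)) * (Real.sqrt (2*Real.pi*σ^2))⁻¹ *
          (Real.exp (-α^2/(2*σ^2)) * (α^3/3 + α*σ^2))
        = 2 * ((α ^ 3 / (3 * Real.sqrt (2 * Real.pi) * σ ^ 3)
            + α / (Real.sqrt (2 * Real.pi) * σ))
          * z * Real.exp (-(z ^ 2 + α ^ 2) / (2 * σ ^ 2))) := by
      rw [hexp, hKs]
      field_simp
    rw [heq2] at hkey
    linarith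
  refine ⟨main, fun z hz => ?_⟩
  have h0 : 0 < (α ^ 3 / (3 * Real.sqrt (2 * Real.pi) * σ ^ 3)
      + α / (Real.sqrt (2 * Real.pi) * σ)) * z * Real.exp (-(z ^ 2 + α ^ 2) / (2 * σ ^ 2)) :=
    mul_pos (mul_pos hcoef hz) (Real.exp_pos _)
  exact lt_of_lt_of_le h0 (main z hz.le)
end HuberAux2
end
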